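/- Let G = (V,E) be a finite connected simple graph with edge-weight function w : E → ℝ, let T ⊆ E be a minimum spanning tree of G, and let e ∈ T be a tree edge that is covered by at least one non-tree edge. Let mc(e) be the minimum of w(f) over all non-tree edges f ∈ E \ T covering e. For t ∈ ℝ, define the modified weight function w_t that agrees with w on all edges except w_t(e) = t. Then e belongs to some minimum spanning tree of G with respect to w_t if and only if t ≤ mc(e). -/

import Mathlib

/-- `T` is a spanning tree of `G`: a set of edges of `G` whose graph is a tree on all of `V`. -/
def isSpanningTree {V : Type*} (G : SimpleGraph V) (T : Set (Sym2 V)) : Prop :=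
  T ⊆ G.edgeSet ∧ (SimpleGraph.fromEdgeSet T).IsTree

/-- `T` is a minimum spanning tree of `G` with respect to the weight function `w`. -/
def isMST {V : Type*} (G : SimpleGraph V) (w : Sym2 V → ℝ) (T : Finset (Sym2 V)) : Prop :=
  isSpanningTree G ↑T ∧
    ∀ T' : Finset (Sym2 V), isSpanningTree G ↑T' → ∑ e ∈ T, w e ≤ ∑ e ∈ T', w e

/-- A non-tree edge `f = {u,v}` covers the tree edge `t` if `t` lies on the unique path
between `u` and `v` in the tree with edge set `T`. -/
def edgeCovers {V : Type*} (T : Set (Sym2 V)) (f t : Sym2 V) : Prop :=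
  ∃ u v : V, f = s(u, v) ∧ ∀ p : (SimpleGraph.fromEdgeSet T).Path u v, t ∈ p.1.edges

/-!
Deleting a tree edge `e = s(a, b)` splits `T` into the side of `a` and the side of `b`; an
edge covers `e` exactly when it joins the two sides, and then `T - e + f` is again a spanning
tree. If `e` lies in a minimum spanning tree `T'` for `w_t`, comparing `T'` with `T - e + f₀`
for a cheapest cover `f₀` gives `t ≤ w f₀ = mc`. Conversely, for `t ≤ mc` the tree `T` stays
minimal: by the exchange property, a spanning tree `T'` avoiding `e` contains an edge `f`
covering `e` such that `T' - f + e` is a spanning tree, so `w T ≤ w T' - w f + w e`, whence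
`w_t T ≤ w T' - w f + t ≤ w_t T'`.
-/

namespace SimpleGraph

variable {V : Type*} {G G₁ G₂ : SimpleGraph V} {a b c d u v x : V}

theorem not_reachable_deleteEdges_iff_forall_path_mem_edges :
    ¬(G.deleteEdges {s(a, b)}).Reachable u v ↔ ∀ p : G.Path u v, s(a, b) ∈ p.1.edges := by
  classical
  rw [reachable_deleteEdges_iff_exists_walk, not_exists_not]
  exact ⟨fun h p ↦ h p.1, fun h p ↦ p.edges_toPath_subset_edges (h p.toPath)⟩

theorem Reachable.deleteEdges_reachable_or (h : G.Reachable a x) :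
    (G.deleteEdges {s(a, b)}).Reachable a x ∨ (G.deleteEdges {s(a, b)}).Reachable b x := by
  set H := G.deleteEdges {s(a, b)}
  by_contra! hx
  obtain ⟨p⟩ := h
  obtain ⟨⟨⟨c, d⟩, hcd⟩, -, hc, hd⟩ :=
    p.exists_boundary_dart {y | H.Reachable a y ∨ H.Reachable b y} (Or.inl .rfl)
      (by simpa using hx)
  simp only [Set.mem_ofPred_eq, not_or] at hc hd
  by_cases hab : s(c, d) = s(a, b)
  · rcases Sym2.eq_iff.mp hab with ⟨-, rfl⟩ | ⟨-, rfl⟩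
    exacts [hd.2 .rfl, hd.1 .rfl]
  · have hH : H.Adj c d := deleteEdges_adj.mpr ⟨hcd, hab⟩
    rcases hc with hc | hc
    exacts [hd.1 (hc.trans hH.reachable), hd.2 (hc.trans hH.reachable)]

theorem Preconnected.deleteEdges_sup_edge (hG : G.Preconnected)
    (huv : ¬(G.deleteEdges {s(a, b)}).Reachable u v) :
    (G.deleteEdges {s(a, b)} ⊔ edge u v).Preconnected := by
  set H := G.deleteEdges {s(a, b)}
  have hHK : H ≤ H ⊔ edge u v := le_sup_left
  have hne : u ≠ v := by rintro rfl; exact huv .rfl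
  have huvK : (H ⊔ edge u v).Reachable u v :=
    Adj.reachable (Or.inr ((edge_adj u v u v).mpr ⟨Or.inl ⟨rfl, rfl⟩, hne⟩))
  have habK : (H ⊔ edge u v).Reachable a b := by
    rcases (hG a u).deleteEdges_reachable_or (b := b) with hu | hu <;>
      rcases (hG a v).deleteEdges_reachable_or (b := b) with hv | hv
    · exact absurd (hu.symm.trans hv) huv
    · exact ((hu.mono hHK).trans huvK).trans (hv.mono hHK).symm
    · exact (((hu.mono hHK).trans huvK).trans (hv.mono hHK).symm).symm
    · exact absurd (hu.symm.trans hv) huv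
  have haK (x : V) : (H ⊔ edge u v).Reachable a x := by
    rcases (hG a x).deleteEdges_reachable_or (b := b) with hx | hx
    exacts [hx.mono hHK, habK.trans (hx.mono hHK)]
  exact fun x y ↦ (haK x).symm.trans (haK y)

theorem IsTree.deleteEdges_sup_edge (hG : G.IsTree)
    (huv : ¬(G.deleteEdges {s(a, b)}).Reachable u v) :
    (G.deleteEdges {s(a, b)} ⊔ edge u v).IsTree where
  connected :=
    have := hG.connected.nonempty
    ⟨hG.connected.preconnected.deleteEdges_sup_edge huv⟩
  isAcyclic := (hG.isAcyclic.anti (deleteEdges_le _)).sup_edge_of_not_reachable huv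

/-- The edge `s(c, d)` is where the `G₂`-path from `a` to `b` leaves the component of `a`
in `G₁` minus `s(a, b)`. -/
theorem IsAcyclic.exists_exchange (h₁ : G₁.IsAcyclic) (h₂ : G₂.IsTree) (hab : G₁.Adj a b)
    (hab₂ : ¬G₂.Adj a b) :
    ∃ c d, G₂.Adj c d ∧ ¬G₁.Adj c d ∧ ¬(G₁.deleteEdges {s(a, b)}).Reachable c d ∧
      ¬(G₂.deleteEdges {s(c, d)}).Reachable a b := by
  set H := G₁.deleteEdges {s(a, b)}
  have hnab : ¬H.Reachable a b := isAcyclic_iff_forall_isBridge.mp h₁ (G₁.mem_edgeSet.mpr hab)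
  obtain ⟨q, hq⟩ := (h₂.connected.preconnected a b).exists_isPath
  obtain ⟨dt, hdt, hc, hd⟩ := q.exists_boundary_dart {y | H.Reachable a y} .rfl hnab
  obtain ⟨⟨c, d⟩, hcd⟩ := dt
  have hcd₁ : ¬H.Reachable c d := fun h ↦ hd (hc.trans h)
  refine ⟨c, d, hcd, fun h ↦ ?_, hcd₁, ?_⟩
  · by_cases he : s(c, d) = s(a, b)
    · exact hab₂ (by rw [← mem_edgeSet, ← he]; exact hcd)
    · exact hcd₁ (deleteEdges_adj.mpr ⟨h, he⟩).reachable
  · rw [not_reachable_deleteEdges_iff_forall_path_mem_edges]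
    intro p
    rw [(h₂.isAcyclic.subsingleton_path a b).elim p ⟨q, hq⟩]
    exact List.mem_map_of_mem hdt

end SimpleGraph

open SimpleGraph

section SpanningTree

variable {V : Type*} {G : SimpleGraph V} {S S' : Set (Sym2 V)} {e f : Sym2 V}

theorem edgeCovers_iff {a b : V} :
    edgeCovers S f s(a, b) ↔
      ∃ u v, f = s(u, v) ∧ ¬((fromEdgeSet S).deleteEdges {s(a, b)}).Reachable u v := by
  simp only [edgeCovers, not_reachable_deleteEdges_iff_forall_path_mem_edges]

theorem isSpanningTree_insert_sdiff (hS : isSpanningTree G S) (hf : f ∈ G.edgeSet)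
    (hcov : edgeCovers S f e) : isSpanningTree G (insert f (S \ {e})) := by
  induction e using Sym2.ind with | h a b => ?_
  obtain ⟨u, v, rfl, huv⟩ := edgeCovers_iff.mp hcov
  refine ⟨Set.insert_subset hf (Set.sdiff_subset.trans hS.1), ?_⟩
  rw [Set.insert_eq, fromEdgeSet_union, sup_comm, ← deleteEdges_fromEdgeSet]
  exact hS.2.deleteEdges_sup_edge huv

theorem exists_edgeCovers_of_isSpanningTree (hS : isSpanningTree G S)
    (hS' : isSpanningTree G S') (he : e ∈ S) (he' : e ∉ S') :
    ∃ f ∈ S', f ∉ S ∧ edgeCovers S f e ∧ edgeCovers S' e f := by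
  induction e using Sym2.ind with | h a b => ?_
  have hab : (fromEdgeSet S).Adj a b := (fromEdgeSet_adj S).mpr ⟨he, G.ne_of_adj (hS.1 he)⟩
  have hab' : ¬(fromEdgeSet S').Adj a b := fun h ↦ he' ((fromEdgeSet_adj S').mp h).1
  obtain ⟨c, d, hcd', hcd, hcov, hcov'⟩ := hS.2.isAcyclic.exists_exchange hS'.2 hab hab'
  rw [fromEdgeSet_adj] at hcd' hcd
  exact ⟨s(c, d), hcd'.1, fun h ↦ hcd ⟨h, hcd'.2⟩, edgeCovers_iff.mpr ⟨c, d, rfl, hcov⟩,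
    edgeCovers_iff.mpr ⟨a, b, rfl, hcov'⟩⟩

end SpanningTree

namespace Finset

variable {ι M : Type*} [DecidableEq ι] [AddCommGroup M] {s : Finset ι} {i j : ι}

theorem sum_update_of_mem_eq_sub_add (hi : i ∈ s) (g : ι → M) (b : M) :
    ∑ x ∈ s, Function.update g i b x = ∑ x ∈ s, g x - g i + b := by
  rw [sum_update_of_mem hi, ← sum_erase_eq_sub hi, sdiff_singleton_eq_erase, add_comm]

theorem sum_insert_erase_eq_sub_add (hi : i ∈ s) (hj : j ∉ s) (g : ι → M) :
    ∑ x ∈ insert j (s.erase i), g x = ∑ x ∈ s, g x - g i + g j := by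
  rw [sum_insert fun h ↦ hj (mem_of_mem_erase h), sum_erase_eq_sub hi, add_comm]

end Finset

section MinimumSpanningTree

variable {V : Type*} [DecidableEq V] {G : SimpleGraph V} {w : Sym2 V → ℝ}
  {T T' : Finset (Sym2 V)} {e f : Sym2 V} {t : ℝ}

theorem isSpanningTree_insert_erase (hT : isSpanningTree G ↑T) (hf : f ∈ G.edgeSet)
    (hcov : edgeCovers (↑T) f e) : isSpanningTree G ↑(insert f (T.erase e)) := by
  rw [Finset.coe_insert, Finset.coe_erase]
  exact isSpanningTree_insert_sdiff hT hf hcov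

theorem le_of_isMST_update (hT : isMST G w T) (he : e ∈ T) (hf : f ∈ G.edgeSet) (hfT : f ∉ T)
    (hcov : edgeCovers (↑T) f e) (hT' : isMST G (Function.update w e t) T') (heT' : e ∈ T') :
    t ≤ w f := by
  have hS := isSpanningTree_insert_erase hT.1 hf hcov
  have hef : e ≠ f := by rintro rfl; exact hfT he
  have heS : e ∉ insert f (T.erase e) := by simp [hef]
  have hT'S := hT'.2 _ hS
  rw [Finset.sum_update_of_mem_eq_sub_add heT', Finset.sum_update_of_notMem heS,
    Finset.sum_insert_erase_eq_sub_add he hfT] at hT'S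
  linarith [hT.2 T' hT'.1]

theorem isMST_update_of_forall_le (hT : isMST G w T) (he : e ∈ T)
    (ht : ∀ f ∈ G.edgeSet, f ∉ T → edgeCovers (↑T) f e → t ≤ w f) :
    isMST G (Function.update w e t) T := by
  refine ⟨hT.1, fun T' hT' ↦ ?_⟩
  rw [Finset.sum_update_of_mem_eq_sub_add he]
  by_cases heT' : e ∈ T'
  · rw [Finset.sum_update_of_mem_eq_sub_add heT']
    linarith [hT.2 T' hT']
  obtain ⟨f, hfT', hfT, hcov, hcov'⟩ := exists_edgeCovers_of_isSpanningTree hT.1 hT' he heT'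
  have hS := isSpanningTree_insert_erase hT' (hT.1.1 he) hcov'
  rw [Finset.sum_update_of_notMem heT']
  linarith [hT.2 _ hS, Finset.sum_insert_erase_eq_sub_add hfT' heT' w, ht f (hT'.1 hfT') hfT hcov]

end MinimumSpanningTree

theorem tree_edge_sensitivity_general {V : Type*} [DecidableEq V]
    (G : SimpleGraph V) (w : Sym2 V → ℝ)
    (T : Finset (Sym2 V)) (hMST : isMST G w T)
    (e : Sym2 V) (he : e ∈ T)
    (mc : ℝ)
    (hmc : IsLeast (w '' {f | f ∈ G.edgeSet ∧ f ∉ T ∧ edgeCovers (↑T) f e}) mc) :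
    ∀ t : ℝ,
      (∃ T' : Finset (Sym2 V), isMST G (Function.update w e t) T' ∧ e ∈ T') ↔ t ≤ mc := by
  intro t
  constructor
  · rintro ⟨T', hT', heT'⟩
    obtain ⟨f, ⟨hf, hfT, hcov⟩, rfl⟩ := hmc.1
    exact le_of_isMST_update hMST he hf hfT hcov hT' heT'
  · intro ht
    refine ⟨T, isMST_update_of_forall_le hMST he fun f hf hfT hcov ↦ ?_, he⟩
    exact ht.trans (hmc.2 ⟨f, ⟨hf, hfT, hcov⟩, rfl⟩)

/-- Sensitivity of a tree edge: if `T` is an MST of `G` w.r.t. `w`, `e ∈ T` is covered by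
at least one non-tree edge, and `mc` is the minimum of `w f` over non-tree edges `f`
covering `e`, then for all `t`, the edge `e` belongs to some MST w.r.t. the weight
function modified so that `e` has weight `t`, iff `t ≤ mc`. -/
theorem tree_edge_sensitivity {V : Type*} [Fintype V] [DecidableEq V]
    (G : SimpleGraph V) (hG : G.Connected) (w : Sym2 V → ℝ)
    (T : Finset (Sym2 V)) (hMST : isMST G w T)
    (e : Sym2 V) (he : e ∈ T)
    (mc : ℝ)
    (hmc : IsLeast (w '' {f | f ∈ G.edgeSet ∧ f ∉ T ∧ edgeCovers (↑T) f e}) mc) :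
    ∀ t : ℝ,
      (∃ T' : Finset (Sym2 V), isMST G (Function.update w e t) T' ∧ e ∈ T') ↔ t ≤ mc :=
  tree_edge_sensitivity_general G w T hMST e he mc hmc
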